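/- Let g be a probability measure on ℝ, let M ≥ 1, and suppose g((−∞, log M]) = 1, i.e. Z ≤ log M g-almost surely. Define α(z) := ∫ min(1, exp(z'−z)) g(dz') and c := ∫ min(1, exp(z')/M) g(dz'). Then c > 0, α(z) ≥ c for all z ≤ log M, and consequently, for the meeting time τ := inf{n ≥ 1 : u_n ≤ min(1, exp(Z*_n − Z₀))} of the coupled chains (with Z₀ ~ g, Z*_n i.i.d. ~ g, u_n i.i.d. Uniform[0,1], all independent), P(τ > n) ≤ (1 − c)^n for all n ≥ 0. -/

import Mathlib

/-!
On the event `Z₀ ≤ log M` the acceptance probability of the coupling satisfies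
`min(1, exp(Z* - Z₀)) ≥ min(1, exp(Z*)/M)`, so the coupling can fail at step `k` only if
`u_k > min(1, exp(Z*_k)/M)`, an event that no longer involves `Z₀`. These events are independent
across `k` (they are built from disjoint blocks of the independent family), and each has
probability `1 - c` because `u_k` is uniform and independent of `Z*_k ~ g`. Since `Z₀ ≤ log M`
almost surely, `P(τ > n) ≤ (1 - c)^n`.
-/

open MeasureTheory ProbabilityTheory

/-- The meeting time `τ = inf{n ≥ 1 : u_n ≤ min(1, exp(Z*_n - Z₀))}` of the coupled
PIMH chains (valued in `ℕ∞`, equal to `⊤` if no such `n` exists). -/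
noncomputable def meetingTime {Ω : Type*} (Z0 : Ω → ℝ) (Zstar u : ℕ → Ω → ℝ) (ω : Ω) : ℕ∞ :=
  sInf {t : ℕ∞ | ∃ n : ℕ, t = (n : ℕ∞) ∧ 1 ≤ n ∧
    u n ω ≤ min 1 (Real.exp (Zstar n ω - Z0 ω))}

theorem ProbabilityTheory.iIndep.measure_biInter_eq_prod {Ω ι κ : Type*} {mΩ : MeasurableSpace Ω}
    {μ : Measure Ω} {m : ι → MeasurableSpace Ω} (h_le : ∀ i, m i ≤ mΩ) (h_indep : iIndep m μ)
    {S : κ → Set ι} (hS : Pairwise (Function.onFun Disjoint S)) {E : κ → Set Ω}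
    (hE : ∀ k, MeasurableSet[⨆ i ∈ S k, m i] (E k)) (s : Finset κ) :
    μ (⋂ k ∈ s, E k) = ∏ k ∈ s, μ (E k) := by
  classical
  induction s using Finset.induction_on with
  | empty => simp [h_indep.isProbabilityMeasure.measure_univ]
  | insert a s ha ih =>
    have h_disj : Disjoint (S a) (⋃ k ∈ s, S k) :=
      Set.disjoint_iUnion₂_right.mpr fun k hk => hS (ne_of_mem_of_not_mem hk ha).symm
    have h_rest : MeasurableSet[⨆ i ∈ ⋃ k ∈ s, S k, m i] (⋂ k ∈ s, E k) :=
      Finset.measurableSet_biInter s fun k hk =>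
        (biSup_mono fun i hi => Set.mem_biUnion (Finset.mem_coe.mpr hk) hi :
          (⨆ i ∈ S k, m i) ≤ ⨆ i ∈ ⋃ k ∈ s, S k, m i) _ (hE k)
    rw [Finset.set_biInter_insert, Finset.prod_insert ha, ← ih,
      (Indep_iff _ _ μ).mp (indep_iSup_of_disjoint h_le h_indep h_disj) _ _ (hE a) h_rest]

theorem measurableSet_preimage_prodMk_iSup_comap {Ω ι β : Type*} [mβ : MeasurableSpace β]
    (f : ι → Ω → β) (i j : ι) {D : Set (β × β)} (hD : MeasurableSet D) :
    MeasurableSet[⨆ l ∈ ({i, j} : Set ι), mβ.comap (f l)] ((fun ω => (f i ω, f j ω)) ⁻¹' D) := by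
  have hf : ∀ l ∈ ({i, j} : Set ι), Measurable[⨆ l ∈ ({i, j} : Set ι), mβ.comap (f l)] (f l) :=
    fun l hl => Measurable.of_comap_le (le_iSup₂ (f := fun l _ => mβ.comap (f l)) l hl)
  exact ((hf i (by simp)).prodMk (hf j (by simp))) hD

theorem integrable_min_one {α : Type*} [MeasurableSpace α] (ν : Measure α) [IsFiniteMeasure ν]
    {ψ : α → ℝ} (hψ : Measurable ψ) (hψ0 : 0 ≤ ψ) : Integrable (fun x => min 1 (ψ x)) ν :=
  Integrable.of_bound (measurable_const.min hψ).aestronglyMeasurable 1 <| ae_of_all _ fun x => by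
    rw [Real.norm_of_nonneg (le_min zero_le_one (hψ0 x))]
    exact min_le_left _ _

theorem integral_min_one_le_one {α : Type*} [MeasurableSpace α] (ν : Measure α)
    [IsProbabilityMeasure ν] {ψ : α → ℝ} (hψ : Measurable ψ) (hψ0 : 0 ≤ ψ) :
    ∫ x, min 1 (ψ x) ∂ν ≤ 1 :=
  calc ∫ x, min 1 (ψ x) ∂ν ≤ ∫ _, (1 : ℝ) ∂ν :=
        integral_mono (integrable_min_one ν hψ hψ0) (integrable_const 1) fun _ => min_le_left _ _
    _ = 1 := by simp

theorem integral_pos_of_forall_pos {α : Type*} [MeasurableSpace α] {μ : Measure α} [NeZero μ]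
    {f : α → ℝ} (hf : ∀ x, 0 < f x) (hfi : Integrable f μ) : 0 < ∫ x, f x ∂μ := by
  rw [integral_pos_iff_support_of_nonneg (fun x => (hf x).le) hfi,
    (Set.eq_univ_of_forall fun x => (hf x).ne' : Function.support f = Set.univ)]
  exact Measure.measure_univ_pos.mpr (NeZero.ne μ)

theorem volume_restrict_Icc_zero_one_Ioi {a : ℝ} (ha₀ : 0 ≤ a) :
    volume.restrict (Set.Icc (0 : ℝ) 1) (Set.Ioi a) = ENNReal.ofReal (1 - a) := by
  rw [Measure.restrict_apply measurableSet_Ioi, ← Set.Ici_inter_Iic, ← Set.inter_assoc,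
    Set.inter_eq_left.mpr (Set.Ioi_subset_Ici ha₀), Set.Ioi_inter_Iic, Real.volume_Ioc]

theorem prod_restrict_Icc_setOf_min_one_lt {α : Type*} [MeasurableSpace α] (ν : Measure α)
    [IsProbabilityMeasure ν] {ψ : α → ℝ} (hψ : Measurable ψ) (hψ0 : 0 ≤ ψ) :
    ν.prod (volume.restrict (Set.Icc (0 : ℝ) 1)) {p | min 1 (ψ p.1) < p.2}
      = ENNReal.ofReal (1 - ∫ x, min 1 (ψ x) ∂ν) := by
  have hint := integrable_min_one ν hψ hψ0
  rw [Measure.prod_apply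
    (measurableSet_lt (f := fun p : α × ℝ => min 1 (ψ p.1)) (by fun_prop) measurable_snd)]
  calc ∫⁻ x, volume.restrict (Set.Icc (0 : ℝ) 1) (Prod.mk x ⁻¹' {p | min 1 (ψ p.1) < p.2}) ∂ν
      = ∫⁻ x, ENNReal.ofReal (1 - min 1 (ψ x)) ∂ν :=
        lintegral_congr fun x => volume_restrict_Icc_zero_one_Ioi (le_min zero_le_one (hψ0 x))
    _ = ENNReal.ofReal (∫ x, (1 - min 1 (ψ x)) ∂ν) :=
        (ofReal_integral_eq_lintegral_ofReal ((integrable_const 1).sub hint)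
          (ae_of_all _ fun x => sub_nonneg.mpr (min_le_left _ _))).symm
    _ = ENNReal.ofReal (1 - ∫ x, min 1 (ψ x) ∂ν) := by
        simp [integral_sub (integrable_const 1) hint]

theorem ProbabilityTheory.IndepFun.measure_setOf_min_one_lt {Ω α : Type*} [MeasurableSpace Ω]
    [MeasurableSpace α] {P : Measure Ω} [IsFiniteMeasure P] {Z : Ω → α} {U : Ω → ℝ}
    (hind : IndepFun Z U P) (hZ : Measurable Z) (hU : Measurable U)
    {ν : Measure α} [IsProbabilityMeasure ν]
    (hZlaw : P.map Z = ν) (hUlaw : P.map U = volume.restrict (Set.Icc (0 : ℝ) 1))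
    {ψ : α → ℝ} (hψ : Measurable ψ) (hψ0 : 0 ≤ ψ) :
    P {ω | min 1 (ψ (Z ω)) < U ω} = ENNReal.ofReal (1 - ∫ x, min 1 (ψ x) ∂ν) := by
  rw [← prod_restrict_Icc_setOf_min_one_lt ν hψ hψ0, ← hZlaw, ← hUlaw,
    ← (indepFun_iff_map_prod_eq_prod_map_map hZ.aemeasurable hU.aemeasurable).mp hind,
    Measure.map_apply (hZ.prodMk hU)
      (measurableSet_lt (f := fun p : α × ℝ => min 1 (ψ p.1)) (by fun_prop) measurable_snd)]
  rfl

theorem min_one_exp_div_le_min_one_exp_sub {M z z' : ℝ} (hM : 0 < M) (hz : z ≤ Real.log M) :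
    min 1 (Real.exp z' / M) ≤ min 1 (Real.exp (z' - z)) := by
  rw [Real.exp_sub]
  exact min_le_min_left 1 (div_le_div_of_nonneg_left (Real.exp_pos z').le (Real.exp_pos z)
    ((Real.le_log_iff_exp_le hM).mp hz))

theorem min_one_exp_lt_of_lt_meetingTime {Ω : Type*} {Z0 : Ω → ℝ} {Zstar u : ℕ → Ω → ℝ}
    {ω : Ω} {n k : ℕ} (hτ : (n : ℕ∞) < meetingTime Z0 Zstar u ω) (hk : k ∈ Finset.Icc 1 n) :
    min 1 (Real.exp (Zstar k ω - Z0 ω)) < u k ω := by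
  obtain ⟨hk1, hkn⟩ := Finset.mem_Icc.mp hk
  by_contra! hacc
  have hτk : meetingTime Z0 Zstar u ω ≤ k := sInf_le ⟨k, rfl, hk1, hacc⟩
  exact lt_irrefl _ (hτ.trans_le (hτk.trans (Nat.cast_le.mpr hkn)))

theorem ProbabilityTheory.iIndepFun.measure_biInter_setOf_min_one_lt {Ω ι : Type*}
    [MeasurableSpace Ω] {P : Measure Ω} {X : ι → Ω → ℝ}
    (hindep : iIndepFun X P) (hX : ∀ i, Measurable (X i)) {a b : ℕ → ι}
    (ha : Function.Injective a) (hb : Function.Injective b) (hab : ∀ k l, a k ≠ b l)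
    {ν : Measure ℝ} [IsProbabilityMeasure ν] (hlaw_a : ∀ k, P.map (X (a k)) = ν)
    (hlaw_b : ∀ k, P.map (X (b k)) = volume.restrict (Set.Icc (0 : ℝ) 1))
    {ψ : ℝ → ℝ} (hψ : Measurable ψ) (hψ0 : 0 ≤ ψ) (s : Finset ℕ) :
    P (⋂ k ∈ s, {ω | min 1 (ψ (X (a k) ω)) < X (b k) ω})
      = ENNReal.ofReal (1 - ∫ x, min 1 (ψ x) ∂ν) ^ s.card := by
  have := hindep.isProbabilityMeasure
  have h_disj : Pairwise (Function.onFun Disjoint fun k => ({a k, b k} : Set ι)) :=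
    fun k l hkl => by
      simp [Function.onFun, ha.eq_iff, hb.eq_iff, hkl.symm, hab, (hab k l).symm]
  rw [hindep.iIndep.measure_biInter_eq_prod (fun i => (hX i).comap_le) h_disj
      (E := fun k => {ω | min 1 (ψ (X (a k) ω)) < X (b k) ω}) fun k =>
      measurableSet_preimage_prodMk_iSup_comap X (a k) (b k)
        (measurableSet_lt (f := fun p : ℝ × ℝ => min 1 (ψ p.1)) (by fun_prop) measurable_snd),
    Finset.prod_congr rfl fun k _ => (hindep.indepFun (hab k k)).measure_setOf_min_one_lt
      (hX _) (hX _) (hlaw_a k) (hlaw_b k) hψ hψ0,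
    Finset.prod_const]

theorem setOf_lt_meetingTime_subset {Ω : Type*} (Z0 : Ω → ℝ) (Zstar u : ℕ → Ω → ℝ) {M : ℝ}
    (hM : 0 < M) (n : ℕ) :
    {ω | (n : ℕ∞) < meetingTime Z0 Zstar u ω} ⊆ Z0 ⁻¹' Set.Ioi (Real.log M) ∪
      ⋂ k ∈ Finset.Icc 1 n, {ω | min 1 (Real.exp (Zstar k ω) / M) < u k ω} := by
  intro ω hω
  refine (lt_or_ge (Real.log M) (Z0 ω)).imp_right fun hZ0 => ?_
  simp only [Set.mem_iInter]
  exact fun k hk => (min_one_exp_div_le_min_one_exp_sub hM hZ0).trans_lt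
    (min_one_exp_lt_of_lt_meetingTime hω hk)

theorem meetingTime_geometric_tail
    {Ω : Type*} [MeasurableSpace Ω] (P : Measure Ω)
    (g : Measure ℝ) [IsProbabilityMeasure g]
    (Z0 : Ω → ℝ) (Zstar u : ℕ → Ω → ℝ)
    (hZ0meas : Measurable Z0) (hZsmeas : ∀ n, Measurable (Zstar n))
    (humeas : ∀ n, Measurable (u n))
    (hindep : iIndepFun (β := fun _ : Option (ℕ ⊕ ℕ) => ℝ)
      (fun i : Option (ℕ ⊕ ℕ) => match i with
        | Option.none => Z0
        | Option.some (Sum.inl n) => Zstar n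
        | Option.some (Sum.inr n) => u n) P)
    (hZ0law : P.map Z0 = g) (hZslaw : ∀ n, P.map (Zstar n) = g)
    (hulaw : ∀ n, P.map (u n) = volume.restrict (Set.Icc (0 : ℝ) 1))
    (M : ℝ) (hM : 1 ≤ M) (hbound : g (Set.Iic (Real.log M)) = 1) :
    0 < ∫ z', min 1 (Real.exp z' / M) ∂g ∧
    (∀ z ≤ Real.log M,
      (∫ z', min 1 (Real.exp z' / M) ∂g) ≤ ∫ z', min 1 (Real.exp (z' - z)) ∂g) ∧
    (∀ n : ℕ, P {ω | (n : ℕ∞) < meetingTime Z0 Zstar u ω}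
      ≤ ENNReal.ofReal ((1 - ∫ z', min 1 (Real.exp z' / M) ∂g) ^ n)) := by
  have hM0 : 0 < M := by linarith
  set c := ∫ z', min 1 (Real.exp z' / M) ∂g
  have hψ : Measurable fun z : ℝ => Real.exp z / M := by fun_prop
  have hψ0 : 0 ≤ fun z : ℝ => Real.exp z / M := fun z => by positivity
  have hint := integrable_min_one g hψ hψ0
  refine ⟨integral_pos_of_forall_pos (fun z => by positivity) hint,
    fun z hz => integral_mono hint
      (integrable_min_one g (by fun_prop) fun z' => (Real.exp_pos _).le)
      fun z' => min_one_exp_div_le_min_one_exp_sub hM0 hz, fun n => ?_⟩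
  have hXmeas : ∀ i : Option (ℕ ⊕ ℕ), Measurable (match i with
      | Option.none => Z0
      | Option.some (Sum.inl n) => Zstar n
      | Option.some (Sum.inr n) => u n) := by
    rintro (_ | k | k)
    exacts [hZ0meas, hZsmeas k, humeas k]
  have hZ0_null : P (Z0 ⁻¹' Set.Ioi (Real.log M)) = 0 := by
    rw [← Measure.map_apply hZ0meas measurableSet_Ioi, hZ0law, ← Set.compl_Iic,
      prob_compl_eq_one_sub measurableSet_Iic, hbound, tsub_self]
  have h_reject := hindep.measure_biInter_setOf_min_one_lt hXmeas (a := fun k => some (.inl k))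
    (b := fun k => some (.inr k)) ((Option.some_injective _).comp Sum.inl_injective)
    ((Option.some_injective _).comp Sum.inr_injective) (by simp) hZslaw hulaw hψ hψ0 (Finset.Icc 1 n)
  calc P {ω | (n : ℕ∞) < meetingTime Z0 Zstar u ω}
      ≤ P (Z0 ⁻¹' Set.Ioi (Real.log M)) +
          P (⋂ k ∈ Finset.Icc 1 n, {ω | min 1 (Real.exp (Zstar k ω) / M) < u k ω}) :=
        (measure_mono (setOf_lt_meetingTime_subset Z0 Zstar u hM0 n)).trans (measure_union_le _ _)
    _ = ENNReal.ofReal (1 - c) ^ n := by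
        rw [hZ0_null, zero_add, h_reject, Nat.card_Icc, add_tsub_cancel_right]
    _ = ENNReal.ofReal ((1 - c) ^ n) :=
        (ENNReal.ofReal_pow (sub_nonneg.mpr (integral_min_one_le_one g hψ hψ0)) n).symm
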